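/- Let A, B, C, E ∈ ℝ³ be affinely independent. The map G : ℝ³ → ℝ³ given by G(x) = (dist(x, A), dist(x, B), dist(x, C)) is differentiable at E, and |det(DG(E))| = 6 · V_{ABCE} / (dist(E, A) · dist(E, B) · dist(E, C)), where DG(E) is the derivative of G at E viewed as a 3×3 matrix and V_{ABCE} is the volume of the tetrahedron with vertices A, B, C, E. -/

import Mathlib

/-!
Each distance `x ↦ dist x P` is differentiable away from `P` with gradient the unit vector
`(x - P) / dist x P`. Hence `DG(E)` is the matrix with rows `E - A, E - B, E - C`, each divided by
the corresponding distance, and by row operations the determinant of those rows equals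
`det(B - A, C - A, E - A) = ± 6 V_{ABCE}`.
-/

/-- The (unsigned) volume of the tetrahedron with vertices `A B C E`:
`|det(B - A, C - A, E - A)| / 6`. -/
noncomputable def tetVol (A B C E : EuclideanSpace ℝ (Fin 3)) : ℝ :=
  |(Matrix.of fun i j : Fin 3 => (![B - A, C - A, E - A] j) i).det| / 6

section DistanceMap

variable {F : Type*} [NormedAddCommGroup F] [InnerProductSpace ℝ F]

theorem hasFDerivAt_dist_const {x p : F} (hx : x ≠ p) :
    HasFDerivAt (fun y => dist y p) ((dist x p)⁻¹ • innerSL ℝ (x - p)) x := by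
  have hdist : dist x p ≠ 0 := dist_ne_zero.2 hx
  have hsqrt := ((hasFDerivAt_id x).sub_const p).norm_sq.sqrt
    (pow_ne_zero 2 (by rwa [← dist_eq_norm]))
  simp only [← dist_eq_norm, Real.sqrt_sq dist_nonneg, id] at hsqrt
  convert hsqrt using 1
  rw [ContinuousLinearMap.comp_id, ← Nat.cast_smul_eq_nsmul ℝ, smul_smul]
  congr 1
  field_simp
  norm_num

variable {ι : Type*}

theorem hasFDerivAt_pi_dist_const [Fintype ι] {x : F} {p : ι → F} (hx : ∀ i, x ≠ p i) :
    HasFDerivAt (fun y i => dist y (p i))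
      (ContinuousLinearMap.pi fun i => (dist x (p i))⁻¹ • innerSL ℝ (x - p i)) x :=
  hasFDerivAt_pi.2 fun i => hasFDerivAt_dist_const (hx i)

variable [Fintype ι] [DecidableEq ι]

theorem jacobian_pi_dist_const {x : EuclideanSpace ℝ ι} {p : ι → EuclideanSpace ℝ ι}
    (hx : ∀ i, x ≠ p i) :
    (Matrix.of fun i j => fderiv ℝ (fun y i => dist y (p i)) x (EuclideanSpace.single j 1) i) =
      Matrix.diagonal (fun i => (dist x (p i))⁻¹) * Matrix.of fun i j => (x - p i) j := by
  ext i j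
  simp [(hasFDerivAt_pi_dist_const hx).fderiv, EuclideanSpace.inner_single_right]

theorem det_jacobian_pi_dist_const {x : EuclideanSpace ℝ ι} {p : ι → EuclideanSpace ℝ ι}
    (hx : ∀ i, x ≠ p i) :
    (Matrix.of fun i j => fderiv ℝ (fun y i => dist y (p i)) x (EuclideanSpace.single j 1) i).det =
      (∏ i, dist x (p i))⁻¹ * (Matrix.of fun i j => (x - p i) j).det := by
  rw [jacobian_pi_dist_const hx, Matrix.det_mul, Matrix.det_diagonal, Finset.prod_inv_distrib]

end DistanceMap

theorem det_rows_sub_eq_det_cols_sub (A B C E : EuclideanSpace ℝ (Fin 3)) :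
    (Matrix.of fun i j : Fin 3 => (E - ![A, B, C] i) j).det =
      (Matrix.of fun i j : Fin 3 => (![B - A, C - A, E - A] j) i).det := by
  simp only [Matrix.det_fin_three, Matrix.of_apply, PiLp.sub_apply, Matrix.cons_val_zero,
    Matrix.cons_val_one, Matrix.cons_val]
  ring

/-- For affinely independent `A, B, C, E` in `ℝ³`, the map
`G : x ↦ (dist x A, dist x B, dist x C)` is differentiable at `E` and the determinant of its
Jacobian matrix there satisfies
`|det DG(E)| = 6 · V_{ABCE} / (dist E A · dist E B · dist E C)`. -/
theorem jacobian_of_distances_to_three_points (A B C E : EuclideanSpace ℝ (Fin 3))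
    (h : AffineIndependent ℝ ![A, B, C, E]) :
    DifferentiableAt ℝ
        (fun x : EuclideanSpace ℝ (Fin 3) => ![dist x A, dist x B, dist x C]) E ∧
      |(Matrix.of fun i j : Fin 3 =>
          fderiv ℝ (fun x : EuclideanSpace ℝ (Fin 3) => ![dist x A, dist x B, dist x C]) E
            (EuclideanSpace.single j 1) i).det| =
        6 * tetVol A B C E / (dist E A * dist E B * dist E C) := by
  have hG : (fun x : EuclideanSpace ℝ (Fin 3) => ![dist x A, dist x B, dist x C]) =
      fun x i => dist x (![A, B, C] i) := by
    funext x i; fin_cases i <;> rfl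
  have hE : ∀ i, E ≠ ![A, B, C] i := by
    have hne := fun i : Fin 3 => h.injective.ne (Fin.castSucc_lt_last i).ne'
    simpa [Fin.forall_fin_succ] using hne
  rw [hG]
  refine ⟨(hasFDerivAt_pi_dist_const hE).differentiableAt, ?_⟩
  rw [det_jacobian_pi_dist_const hE, det_rows_sub_eq_det_cols_sub, abs_mul, tetVol,
    Fin.prod_univ_three]
  simp only [Matrix.cons_val_zero, Matrix.cons_val_one, Matrix.cons_val_two, Matrix.tail_cons,
    Matrix.head_cons]
  rw [abs_inv, abs_of_nonneg (by positivity)]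
  ring
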